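/- arXiv:1912.01296 — 2 statements merged into one kernel-verified Lean document; each statement's English description precedes it below -/
import Mathlib

section
/- If Ω^{ev} : ℤ⁴ → Cl(1,3) satisfies the discrete Hestenes equation −D(Ω^{ev}) e_1 e_2 = m Ω^{ev} e_0, then its chiral parts Ω_L = P*_L Ω^{ev}, Ω_R = P*_R Ω^{ev} (applied pointwise) satisfy −D(Ω_L) e_1 e_2 = m Ω_R e_0 and −D(Ω_R) e_1 e_2 = m Ω_L e_0. -/
theorem stmt16 (A : Type*) [Ring A] [Algebra ℝ A] (e : Fin 4 → A)
    (hrel : ∀ μ ν : Fin 4, e μ * e ν + e ν * e μ =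
      (2 * (if μ = ν then (if μ = 0 then 1 else -1) else 0) : ℝ) • (1 : A))
    (star5 : A → A) (hstar5 : ∀ a : A, star5 a = (e 0 * e 1 * e 2 * e 3) * a * (e 2 * e 1))
    (PLs PRs : A → A) (hPLs : ∀ a : A, PLs a = (2 : ℝ)⁻¹ • (a - star5 a))
    (hPRs : ∀ a : A, PRs a = (2 : ℝ)⁻¹ • (a + star5 a))
    (D : ((Fin 4 → ℤ) → A) → ((Fin 4 → ℤ) → A))
    (hD : ∀ Ω : (Fin 4 → ℤ) → A, ∀ k : Fin 4 → ℤ, D Ω k =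
      ∑ μ : Fin 4, e μ * (Ω (Function.update k μ (k μ + 1)) - Ω k)) (m : ℝ)
    (Ω : (Fin 4 → ℤ) → A)
    (hΩ : ∀ k : Fin 4 → ℤ, -(D Ω k) * (e 1 * e 2) = m • (Ω k * e 0)) :
    (∀ k : Fin 4 → ℤ, -(D (fun j => PLs (Ω j)) k) * (e 1 * e 2) = m • (PRs (Ω k) * e 0)) ∧
    (∀ k : Fin 4 → ℤ, -(D (fun j => PRs (Ω j)) k) * (e 1 * e 2) = m • (PLs (Ω k) * e 0)) := by
  -- anticommutation of distinct generators
  have hsw : ∀ μ ν : Fin 4, μ ≠ ν → e μ * e ν = -(e ν * e μ) := by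
    intro μ ν h
    have hh := hrel μ ν
    rw [if_neg h] at hh
    simp only [mul_zero, zero_smul] at hh
    exact eq_neg_of_add_eq_zero_left hh
  -- squares of generators
  have hsq : ∀ μ : Fin 4, e μ * e μ = ((if μ = 0 then (1:ℝ) else -1)) • (1 : A) := by
    intro μ
    have hh := hrel μ μ
    rw [if_pos rfl] at hh
    have h2 : (2:ℝ) • (e μ * e μ) = (2:ℝ) • (((if μ = 0 then (1:ℝ) else -1)) • (1 : A)) := by
      rw [two_smul, smul_smul]; exact hh
    have h3 := congrArg (fun x => ((2:ℝ)⁻¹) • x) h2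
    simpa [smul_smul] using h3
  have h11 : e 1 * e 1 = -1 := by
    rw [hsq 1, if_neg (by decide : (1 : Fin 4) ≠ 0)]
    simp
  have h22 : e 2 * e 2 = -1 := by
    rw [hsq 2, if_neg (by decide : (2 : Fin 4) ≠ 0)]
    simp
  -- right-associated swap
  have sw : ∀ μ ν : Fin 4, μ ≠ ν → ∀ t : A, e μ * (e ν * t) = -(e ν * (e μ * t)) := by
    intro μ ν h t
    rw [← mul_assoc, hsw μ ν h, neg_mul, mul_assoc]
  -- e μ anticommutes with E = e0 e1 e2 e3
  have hE0 : ∀ μ : Fin 4, e μ * (e 0 * e 1 * e 2 * e 3) = -((e 0 * e 1 * e 2 * e 3) * e μ) := by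
    intro μ
    have h4 : μ = 0 ∨ μ = 1 ∨ μ = 2 ∨ μ = 3 := by omega
    simp only [mul_assoc]
    rcases h4 with rfl | rfl | rfl | rfl
    · simp only [hsw 3 0 (by decide), sw 2 0 (by decide), sw 1 0 (by decide),
        mul_neg, neg_mul, neg_neg]
    · simp only [hsw 3 1 (by decide), sw 2 1 (by decide), sw 1 0 (by decide),
        mul_neg, neg_mul, neg_neg]
    · simp only [hsw 3 2 (by decide), sw 2 1 (by decide), sw 2 0 (by decide),
        mul_neg, neg_mul, neg_neg]
    · simp only [sw 3 2 (by decide), sw 3 1 (by decide), sw 3 0 (by decide),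
        mul_neg, neg_mul, neg_neg]
  -- e μ anticommutes with star5
  have hE : ∀ (μ : Fin 4) (a : A), e μ * star5 a = -(star5 (e μ * a)) := by
    intro μ a
    rw [hstar5, hstar5, ← mul_assoc, ← mul_assoc (e μ) (e 0 * e 1 * e 2 * e 3) a,
      hE0 μ, neg_mul, neg_mul, mul_assoc (e 0 * e 1 * e 2 * e 3) (e μ) a]
  -- star5 is additive / linear
  have hs_sub : ∀ x y : A, star5 (x - y) = star5 x - star5 y := by
    intro x y; simp only [hstar5, mul_sub, sub_mul]
  have hs_neg : ∀ x : A, star5 (-x) = -(star5 x) := by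
    intro x; simp only [hstar5, mul_neg, neg_mul]
  have hs_smul : ∀ (r : ℝ) (x : A), star5 (r • x) = r • star5 x := by
    intro r x; simp only [hstar5, mul_smul_comm, smul_mul_assoc]
  -- star5 commutes with right multiplication by (e1 e2) and by e0
  have hq1 : e 2 * (e 1 * (e 1 * e 2)) = 1 := by
    rw [← mul_assoc (e 1), h11, neg_one_mul, mul_neg, h22, neg_neg]
  have hq2 : e 1 * (e 2 * (e 2 * e 1)) = 1 := by
    rw [← mul_assoc (e 2), h22, neg_one_mul, mul_neg, h11, neg_neg]
  have hc12 : ∀ a : A, star5 a * (e 1 * e 2) = star5 (a * (e 1 * e 2)) := by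
    intro a
    simp only [hstar5, mul_assoc, hq1, hq2, mul_one]
  have h210 : e 2 * (e 1 * e 0) = e 0 * (e 2 * e 1) := by
    rw [hsw 1 0 (by decide), mul_neg, sw 2 0 (by decide) (e 1), neg_neg]
  have hc0 : ∀ a : A, star5 a * e 0 = star5 (a * e 0) := by
    intro a
    simp only [hstar5, mul_assoc, h210]
  -- linearity of D
  have hDsub : ∀ (Φ Ψ : (Fin 4 → ℤ) → A) (k : Fin 4 → ℤ),
      D (fun j => Φ j - Ψ j) k = D Φ k - D Ψ k := by
    intro Φ Ψ k
    simp only [hD]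
    rw [← Finset.sum_sub_distrib]
    refine Finset.sum_congr rfl fun μ _ => ?_
    rw [sub_sub_sub_comm, mul_sub]
  have hDadd : ∀ (Φ Ψ : (Fin 4 → ℤ) → A) (k : Fin 4 → ℤ),
      D (fun j => Φ j + Ψ j) k = D Φ k + D Ψ k := by
    intro Φ Ψ k
    simp only [hD]
    rw [← Finset.sum_add_distrib]
    refine Finset.sum_congr rfl fun μ _ => ?_
    rw [add_sub_add_comm, mul_add]
  have hDsmul : ∀ (r : ℝ) (Φ : (Fin 4 → ℤ) → A) (k : Fin 4 → ℤ),
      D (fun j => r • Φ j) k = r • D Φ k := by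
    intro r Φ k
    simp only [hD]
    rw [Finset.smul_sum]
    refine Finset.sum_congr rfl fun μ _ => ?_
    rw [← smul_sub, mul_smul_comm]
  -- D anticommutes with star5
  have hDs : ∀ k : Fin 4 → ℤ, D (fun j => star5 (Ω j)) k = -(star5 (D Ω k)) := by
    intro k
    simp only [hD]
    rw [hstar5 (∑ μ : Fin 4, e μ * (Ω (Function.update k μ (k μ + 1)) - Ω k)),
      Finset.mul_sum, Finset.sum_mul, ← Finset.sum_neg_distrib]
    refine Finset.sum_congr rfl fun μ _ => ?_
    rw [← hstar5, ← hE, hs_sub]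
  -- key pointwise computation for the star5 part
  have key : ∀ (k : Fin 4 → ℤ),
      -(star5 (D Ω k)) * (e 1 * e 2) = m • (star5 (Ω k) * e 0) := by
    intro k
    rw [neg_mul, hc12, ← hs_neg, ← neg_mul, hΩ k, hs_smul, ← hc0]
  have hX : ∀ k, D Ω k * (e 1 * e 2) = -(m • (Ω k * e 0)) := by
    intro k
    have h := hΩ k
    rw [neg_mul] at h
    exact neg_eq_iff_eq_neg.mp h
  have hsX : ∀ k, star5 (D Ω k) * (e 1 * e 2) = -(m • (star5 (Ω k) * e 0)) := by
    intro k
    have h := key k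
    rw [neg_mul] at h
    exact neg_eq_iff_eq_neg.mp h
  constructor
  · intro k
    have hDL : D (fun j => PLs (Ω j)) k = (2:ℝ)⁻¹ • (D Ω k + star5 (D Ω k)) := by
      have he : (fun j => PLs (Ω j)) = fun j => (2:ℝ)⁻¹ • (Ω j - star5 (Ω j)) := by
        funext j; rw [hPLs]
      rw [he, hDsmul ((2:ℝ)⁻¹) (fun j => Ω j - star5 (Ω j)),
        hDsub (fun j => Ω j) (fun j => star5 (Ω j)), hDs, sub_neg_eq_add]
    rw [hDL, hPRs, ← smul_neg, smul_mul_assoc, smul_mul_assoc, smul_comm m ((2:ℝ)⁻¹)]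
    congr 1
    rw [neg_add, add_mul, add_mul, smul_add, hΩ k, key k]
  · intro k
    have hDR : D (fun j => PRs (Ω j)) k = (2:ℝ)⁻¹ • (D Ω k - star5 (D Ω k)) := by
      have he : (fun j => PRs (Ω j)) = fun j => (2:ℝ)⁻¹ • (Ω j + star5 (Ω j)) := by
        funext j; rw [hPRs]
      rw [he, hDsmul ((2:ℝ)⁻¹) (fun j => Ω j + star5 (Ω j)),
        hDadd (fun j => Ω j) (fun j => star5 (Ω j)), hDs, ← sub_eq_add_neg]
    rw [hDR, hPLs, ← smul_neg, smul_mul_assoc, smul_mul_assoc, smul_comm m ((2:ℝ)⁻¹)]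
    congr 1
    rw [neg_sub, sub_mul, sub_mul, smul_sub, hX k, hsX k]
    abel
end

section
/- For p_0, p_1, m ∈ ℝ, the element A = a_1 A_1 + a_2 A_2 of Cl(1,3)⊗ℂ, where A_1 = (m−p_0) + p_1 e_0e_1 + i(m−p_0) e_2e_3 + i p_1 e_0e_1e_2e_3 and A_2 = (m−p_0) e_1e_2 − p_1 e_0e_2 + i(m−p_0) e_1e_3 − i p_1 e_0e_3, satisfies the spin eigenvalue equation S_1 A = (1/2) A, where S_1 = (i/2) e_2 e_3. -/
theorem stmt18 (A : Type*) [Ring A] [Algebra ℂ A] (e : Fin 4 → A)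
    (hrel : ∀ μ ν : Fin 4, e μ * e ν + e ν * e μ =
      (2 * (if μ = ν then (if μ = 0 then 1 else -1) else 0) : ℂ) • (1 : A)) (m p0 p1 : ℝ) (a1 a2 : ℂ)
    (S1 A1 A2 Aa : A)
    (hS1 : S1 = (Complex.I / 2) • (e 2 * e 3))
    (hA1 : A1 = ((m - p0 : ℝ) : ℂ) • (1 : A) + ((p1 : ℝ) : ℂ) • (e 0 * e 1)
      + (Complex.I * ((m - p0 : ℝ) : ℂ)) • (e 2 * e 3)
      + (Complex.I * ((p1 : ℝ) : ℂ)) • (e 0 * e 1 * e 2 * e 3))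
    (hA2 : A2 = ((m - p0 : ℝ) : ℂ) • (e 1 * e 2) - ((p1 : ℝ) : ℂ) • (e 0 * e 2)
      + (Complex.I * ((m - p0 : ℝ) : ℂ)) • (e 1 * e 3)
      - (Complex.I * ((p1 : ℝ) : ℂ)) • (e 0 * e 3))
    (hAa : Aa = a1 • A1 + a2 • A2) :
    S1 * Aa = (2 : ℂ)⁻¹ • Aa := by
  have key : ∀ μ ν : Fin 4, μ ≠ ν → e ν * e μ = -(e μ * e ν) := by
    intro μ ν h
    have h1 := hrel μ ν
    simp [h] at h1
    exact eq_neg_of_add_eq_zero_right h1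
  -- swap lemmas (with continuation x)
  have sw : ∀ (μ ν : Fin 4) (x : A), μ ≠ ν → e ν * (e μ * x) = -(e μ * (e ν * x)) := by
    intro μ ν x h
    rw [← mul_assoc, key μ ν h, neg_mul, mul_assoc]
  -- squares
  have sq0 : ∀ x : A, e 0 * (e 0 * x) = x := by
    intro x
    have h := hrel 0 0
    simp at h
    have h2 : (2:ℂ) • (e 0 * e 0) = (2:ℂ) • (1:A) := by
      rw [two_smul, h, two_smul]
    have h3 := smul_right_injective A (by norm_num : (2:ℂ) ≠ 0) h2
    rw [← mul_assoc, h3, one_mul]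
  have sqn : ∀ μ : Fin 4, μ ≠ 0 → ∀ x : A, e μ * (e μ * x) = -x := by
    intro μ hμ x
    have h := hrel μ μ
    simp [hμ] at h
    have h2 : (2:ℂ) • (e μ * e μ) = (2:ℂ) • (-1:A) := by
      rw [two_smul, h]; module
    have h3 := smul_right_injective A (by norm_num : (2:ℂ) ≠ 0) h2
    rw [← mul_assoc, h3, neg_one_mul]
  have sq1 := sqn 1 (by decide)
  have sq2 := sqn 2 (by decide)
  have sq3 := sqn 3 (by decide)
  have sw01 := fun x => sw 0 1 x (by decide)
  have sw02 := fun x => sw 0 2 x (by decide)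
  have sw03 := fun x => sw 0 3 x (by decide)
  have sw12 := fun x => sw 1 2 x (by decide)
  have sw13 := fun x => sw 1 3 x (by decide)
  have sw23 := fun x => sw 2 3 x (by decide)
  have k01 := key 0 1 (by decide)
  have k02 := key 0 2 (by decide)
  have k03 := key 0 3 (by decide)
  have k12 := key 1 2 (by decide)
  have k13 := key 1 3 (by decide)
  have k23 := key 2 3 (by decide)
  have sq2' : e 2 * e 2 = -1 := by
    have := sq2 1; simpa using this
  have sq3' : e 3 * e 3 = -1 := by
    have := sq3 1; simpa using this
  subst hS1 hA1 hA2 hAa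
  simp only [smul_add, smul_sub, mul_add, mul_sub, smul_smul, mul_smul_comm, smul_mul_assoc,
    mul_one, mul_assoc, sw01, sw02, sw03, sw12, sw13, sw23, sq0, sq1, sq2, sq3,
    k01, k02, k03, k12, k13, k23, sq2', sq3',
    mul_neg, neg_mul, smul_neg, neg_neg, neg_add, neg_sub]
  match_scalars <;> ring_nf <;> simp [Complex.I_sq] <;> ring
end
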